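/- Fix a dimension d and a stationary ergodic cyclically monotone Poisson matching ensemble in dimension d. For every ε > 0 there exists a deterministic L < ∞ such that for P-almost every ω there is r*(ω) < ∞ with the property that for every R ≥ r*(ω): Q(ω)({(x,y) ∈ ℝ^d × ℝ^d : x ∈ (−R,R)^d and |y − x| > L}) ≤ (εR)^d. -/

import Mathlib

open MeasureTheory ProbabilityTheory Filter

noncomputable section

/-- Euclidean space `ℝ^d`. -/
abbrev Euc (d : ℕ) := EuclideanSpace ℝ (Fin d)

/-- The vector of `ℝ^d` corresponding to an integer vector `z ∈ ℤ^d`. -/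
def intVec (d : ℕ) (z : Fin d → ℤ) : Euc d := WithLp.toLp 2 (fun i => (z i : ℝ))

/-- `μ : Ω → Measure (ℝ^d)` is a unit-intensity Poisson point process under `P`:
the counts of Borel sets of finite Lebesgue measure are Poisson distributed with the
Lebesgue measure as parameter, and counts of pairwise disjoint sets are independent. -/
def IsPoissonPP {Ω : Type*} [MeasurableSpace Ω] (d : ℕ) (P : Measure Ω)
    (μ : Ω → Measure (Euc d)) : Prop :=
  (∀ A : Set (Euc d), MeasurableSet A → volume A ≠ ⊤ → ∀ k : ℕ,
    P {ω | μ ω A = k} =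
      ENNReal.ofReal (Real.exp (-(volume A).toReal) * (volume A).toReal ^ k /
        (Nat.factorial k))) ∧
  (∀ (m : ℕ) (A : Fin m → Set (Euc d)),
    (∀ i, MeasurableSet (A i)) → (∀ i, volume (A i) ≠ ⊤) →
    Pairwise (Function.onFun Disjoint A) →
    iIndepFun (fun i ω => μ ω (A i)) P)

/-- A set `S ⊆ ℝ^d × ℝ^d` is cyclically monotone: for any cycle of points of `S`,
`∑ₙ yₙ · (xₙ - xₙ₋₁) ≥ 0` (indices cyclic). -/
def CyclicallyMonotoneSet {d : ℕ} (S : Set (Euc d × Euc d)) : Prop :=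
  ∀ (N : ℕ) (p : Fin (N + 1) → Euc d × Euc d), (∀ n, p n ∈ S) →
    0 ≤ ∑ n : Fin (N + 1), (inner ℝ ((p n).2) ((p n).1 - (p (n - 1)).1) : ℝ)

/-- The (topological) support of a measure: points all of whose neighbourhoods have
positive measure. -/
def msupport {X : Type*} [TopologicalSpace X] [MeasurableSpace X] (π : Measure X) : Set X :=
  {x | ∀ U ∈ nhds x, π U ≠ 0}

/-- A stationary ergodic cyclically monotone Poisson matching ensemble in dimension `d`:
independent unit-intensity Poisson point processes `μ, ν` on `ℝ^d`, a coupling `Q` with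
marginals `μ, ν` and cyclically monotone support, and an ergodic measure-preserving
`ℤ^d`-action `θ` under which `(μ, ν, Q)` is equivariant. -/
structure PoissonMatchingEnsemble (d : ℕ) (Ω : Type*) [MeasurableSpace Ω] where
  P : Measure Ω
  isProb : IsProbabilityMeasure P
  μ : Ω → Measure (Euc d)
  ν : Ω → Measure (Euc d)
  Q : Ω → Measure (Euc d × Euc d)
  μ_meas : Measurable μ
  ν_meas : Measurable ν
  Q_meas : Measurable Q
  μ_poisson : IsPoissonPP d P μ
  ν_poisson : IsPoissonPP d P ν
  indep : IndepFun μ ν P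
  marg_fst : ∀ᵐ ω ∂P, (Q ω).map Prod.fst = μ ω
  marg_snd : ∀ᵐ ω ∂P, (Q ω).map Prod.snd = ν ω
  cyclMono : ∀ᵐ ω ∂P, CyclicallyMonotoneSet (msupport (Q ω))
  θ : (Fin d → ℤ) → Ω → Ω
  θ_measurePreserving : ∀ z, MeasurePreserving (θ z) P P
  θ_zero : θ 0 = id
  θ_add : ∀ z z', θ (z + z') = θ z ∘ θ z'
  ergodic : ∀ A : Set Ω, MeasurableSet A → (∀ z, θ z ⁻¹' A = A) → P A = 0 ∨ P A = 1
  μ_equivariant : ∀ z, ∀ᵐ ω ∂P, μ (θ z ω) = (μ ω).map (fun x => x + intVec d z)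
  ν_equivariant : ∀ z, ∀ᵐ ω ∂P, ν (θ z ω) = (ν ω).map (fun x => x + intVec d z)
  Q_equivariant : ∀ z, ∀ᵐ ω ∂P,
    Q (θ z ω) = (Q ω).map (fun p => (p.1 + intVec d z, p.2 + intVec d z))

/-! Write `f_L(ω)` for the `Q(ω)`-mass of the pairs `(x, y)` with `x` in the unit cube at the
origin and `|y - x| > L`. It is dominated by `μ(ω)` of that cube, a Poisson variable of mean `1`,
so `E f_L → 0` as `L → ∞`. By equivariance, the mass of long pairs with `x ∈ (-R, R)^d` is at most
the sum of `f_L` along the orbit points `θ_z ω`, `z` in the lattice box of radius `⌈R⌉`.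

Instead of a multiparameter ergodic theorem we use a maximal inequality: a Vitali covering of
`ℤ^d`, transferred to the orbits of the measure-preserving action, gives
`η · P(some box average of f exceeds η) ≤ 10^d E f`. The limsup of the box averages is
`θ`-invariant, so by ergodicity it is `≤ η` almost surely once `10^d E f_L < η`; taking
`η` of order `(ε/5)^d` gives the bound `(εR)^d` for all large `R`. -/

open Finset
open scoped ENNReal NNReal Topology

namespace ProbabilityTheory

lemma tsum_poissonMeasure_singleton (r : ℝ≥0) : ∑' n : ℕ, poissonMeasure r {n} = 1 := by
  simp_rw [poissonMeasure_singleton]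
  rw [← ENNReal.ofReal_tsum_of_nonneg (fun n => by positivity)
    (hasSum_one_poissonMeasure r).summable, (hasSum_one_poissonMeasure r).tsum_eq,
    ENNReal.ofReal_one]

lemma lintegral_natCast_poissonMeasure (r : ℝ≥0) :
    ∫⁻ n, (n : ℝ≥0∞) ∂poissonMeasure r = r := by
  have hstep : ∀ n : ℕ, ((n + 1 : ℕ) : ℝ≥0∞) * poissonMeasure r {n + 1}
      = r * poissonMeasure r {n} := fun n => by
    rw [poissonMeasure_singleton, poissonMeasure_singleton, ← ENNReal.ofReal_natCast,
      ← ENNReal.ofReal_coe_nnreal, ← ENNReal.ofReal_mul (by positivity),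
      ← ENNReal.ofReal_mul (by positivity), Nat.factorial_succ]
    congr 1
    push_cast
    field_simp
    ring
  rw [lintegral_countable', tsum_eq_zero_add' ENNReal.summable]
  simp only [hstep, ENNReal.tsum_mul_left, tsum_poissonMeasure_singleton]
  simp

variable {Ω : Type*} [MeasurableSpace Ω] {P : Measure Ω} [IsProbabilityMeasure P]

lemma lintegral_eq_of_measure_eq_poissonMeasure {X : Ω → ℝ≥0∞} (hX : Measurable X) {r : ℝ≥0}
    (hlaw : ∀ k : ℕ, P {ω | X ω = k} = poissonMeasure r {k}) : ∫⁻ ω, X ω ∂P = r := by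
  set E : ℕ → Set Ω := fun k => {ω | X ω = k}
  have hE : ∀ k, MeasurableSet (E k) := fun k => hX (measurableSet_singleton _)
  have hdisj : Pairwise (Function.onFun Disjoint E) := fun j k hjk =>
    Set.disjoint_left.2 fun ω (hj : X ω = j) (hk : X ω = k) =>
      hjk (by exact_mod_cast hj ▸ hk)
  have hfull : ∀ᵐ ω ∂P, ω ∈ ⋃ k, E k := by
    rw [ae_iff, ← Set.compl_def, prob_compl_eq_zero_iff (.iUnion hE), measure_iUnion hdisj hE]
    simp only [E, hlaw, tsum_poissonMeasure_singleton]
  rw [← Measure.restrict_eq_self_of_ae_mem hfull, lintegral_iUnion hE hdisj,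
    ← lintegral_natCast_poissonMeasure, lintegral_countable']
  refine tsum_congr fun k => ?_
  rw [setLIntegral_congr_fun (hE k) fun ω (hω : X ω = k) => hω, setLIntegral_const, hlaw]

end ProbabilityTheory

namespace IntLattice

section LatticeBall

variable {d : ℕ}

def latticeBall (x : Fin d → ℤ) (ρ : ℕ) : Finset (Fin d → ℤ) :=
  Fintype.piFinset fun i => Icc (x i - ρ) (x i + ρ)

lemma mem_latticeBall {x y : Fin d → ℤ} {ρ : ℕ} :
    y ∈ latticeBall x ρ ↔ ∀ i, |y i - x i| ≤ ρ := by
  simp only [latticeBall, Fintype.mem_piFinset, mem_Icc, abs_le]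
  refine forall_congr' fun i => ?_
  omega

lemma self_mem_latticeBall (x : Fin d → ℤ) (ρ : ℕ) : x ∈ latticeBall x ρ :=
  mem_latticeBall.2 fun i => by simp

lemma card_latticeBall (x : Fin d → ℤ) (ρ : ℕ) : #(latticeBall x ρ) = (2 * ρ + 1) ^ d := by
  have h : ∀ i, (x i + ρ + 1 - (x i - ρ)).toNat = 2 * ρ + 1 := fun i => by omega
  simp [latticeBall, Fintype.card_piFinset, h]

lemma latticeBall_subset_latticeBall {x y : Fin d → ℤ} {ρ σ : ℕ}
    (h : ∀ i, |x i - y i| + ρ ≤ σ) : latticeBall x ρ ⊆ latticeBall y σ := by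
  intro z hz
  rw [mem_latticeBall] at hz ⊢
  intro i
  have := hz i
  have := h i
  have := abs_sub_le (z i) (x i) (y i)
  omega

-- Vitali's lemma with `τ = 2` selects disjoint balls whose `5`-fold enlargements cover `E`.
lemma card_mul_le_of_lt_sum_latticeBall (F : (Fin d → ℤ) → ℝ≥0∞) (η : ℝ≥0∞)
    (E : Finset (Fin d → ℤ)) (r : (Fin d → ℤ) → ℕ)
    (hF : ∀ x ∈ E, η * ((2 * r x + 1) ^ d : ℕ) < ∑ y ∈ latticeBall x (r x), F y) :
    #E * η ≤ 5 ^ d * ∑ y ∈ E.biUnion fun x => latticeBall x (r x), F y := by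
  classical
  obtain ⟨u, huE, hdisj, hcover⟩ := Vitali.exists_disjoint_subfamily_covering_enlargement
    (fun x => (latticeBall x (r x) : Set (Fin d → ℤ))) E (fun x => r x) 2 one_lt_two
    (fun _ _ => Nat.cast_nonneg _) (∑ x ∈ E, r x)
    (fun x hx => by exact_mod_cast single_le_sum (fun _ _ => Nat.zero_le _) hx)
    (fun x _ => ⟨x, self_mem_latticeBall x (r x)⟩)
  set D := E.filter (· ∈ u)
  have hDu : (D : Set (Fin d → ℤ)) = u := by
    ext x; simpa [D] using fun hx => huE hx
  have hE : E ⊆ D.biUnion fun y => latticeBall y (5 * r y) := by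
    intro x hx
    obtain ⟨y, hyu, ⟨w, hwx, hwy⟩, hxy⟩ := hcover x hx
    refine mem_biUnion.2 ⟨y, by simpa [D] using ⟨huE hyu, hyu⟩, latticeBall_subset_latticeBall
      (fun i => ?_) (self_mem_latticeBall x (r x))⟩
    have hxy : r x ≤ 2 * r y := by exact_mod_cast hxy
    have := mem_latticeBall.1 hwx i
    have := mem_latticeBall.1 hwy i
    have := abs_sub_le (x i) (w i) (y i)
    rw [abs_sub_comm (x i) (w i)] at this
    push_cast
    omega
  calc (#E : ℝ≥0∞) * η
      ≤ (∑ y ∈ D, #(latticeBall y (5 * r y)) : ℕ) * η := by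
        gcongr
        exact (card_le_card hE).trans card_biUnion_le
      _ ≤ ∑ y ∈ D, 5 ^ d * (η * ((2 * r y + 1) ^ d : ℕ)) := by
        push_cast [sum_mul, card_latticeBall]
        refine sum_le_sum fun y _ => ?_
        calc (2 * (5 * (r y : ℝ≥0∞)) + 1) ^ d * η ≤ (5 * (2 * r y + 1)) ^ d * η := by
              gcongr
              norm_cast
              omega
          _ = 5 ^ d * (η * (2 * r y + 1) ^ d) := by rw [mul_pow]; ring
      _ ≤ 5 ^ d * ∑ y ∈ D, ∑ z ∈ latticeBall y (r y), F z := by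
        rw [← mul_sum]
        gcongr with y hy
        exact (hF y (filter_subset _ _ hy)).le
      _ = 5 ^ d * ∑ z ∈ D.biUnion fun y => latticeBall y (r y), F z := by
        rw [sum_biUnion fun a ha b hb hab =>
          disjoint_coe.1 (hdisj (hDu ▸ ha) (hDu ▸ hb) hab)]
      _ ≤ 5 ^ d * ∑ y ∈ E.biUnion fun x => latticeBall x (r x), F y := by
        gcongr 5 ^ d * ?_
        exact sum_le_sum_of_subset (biUnion_subset_biUnion_of_subset_left _ (filter_subset _ _))

end LatticeBall

lemma natCast_two_mul_ceil_add_one_pow_le (d : ℕ) {R : ℝ} (hR : 1 ≤ R) :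
    (((2 * ⌈R⌉₊ + 1) ^ d : ℕ) : ℝ≥0∞) ≤ ENNReal.ofReal ((5 * R) ^ d) := by
  rw [← ENNReal.ofReal_natCast]
  refine ENNReal.ofReal_le_ofReal ?_
  have := Nat.ceil_lt_add_one (zero_le_one.trans hR)
  push_cast
  gcongr
  linarith

lemma tendsto_ratio_two_mul_add_one_pow (d c : ℕ) :
    Tendsto (fun m : ℕ => (((2 * (m + c) + 1) ^ d : ℕ) : ℝ≥0∞) / ((2 * m + 1) ^ d : ℕ))
      atTop (𝓝 1) := by
  have hreal : Tendsto (fun m : ℕ => (((2 * c + 1 : ℝ) + 2 * m) / (1 + 2 * m)) ^ d) atTop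
      (𝓝 1) := by
    simpa using (tendsto_add_mul_div_add_mul_atTop_nhds (2 * c + 1 : ℝ) 1 2
      (two_ne_zero (α := ℝ))).pow d
  rw [← ENNReal.ofReal_one]
  refine (ENNReal.tendsto_ofReal hreal).congr fun m => ?_
  rw [← ENNReal.ofReal_natCast, ← ENNReal.ofReal_natCast,
    ← ENNReal.ofReal_div_of_pos (by positivity)]
  congr 1
  push_cast
  rw [div_pow]
  ring_nf

section BoxAverage

variable {d : ℕ} {Ω : Type*} (θ : (Fin d → ℤ) → Ω → Ω) (f : Ω → ℝ≥0∞)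

def boxSum (m : ℕ) (ω : Ω) : ℝ≥0∞ := ∑ z ∈ latticeBall 0 m, f (θ z ω)

def boxAvg (m : ℕ) (ω : Ω) : ℝ≥0∞ := boxSum θ f m ω / ((2 * m + 1) ^ d : ℕ)

lemma natCast_mul_boxAvg (m : ℕ) (ω : Ω) :
    ((2 * m + 1) ^ d : ℕ) * boxAvg θ f m ω = boxSum θ f m ω :=
  ENNReal.mul_div_cancel (by positivity) (ENNReal.natCast_ne_top _)

def maximalSet (η : ℝ≥0∞) (M : ℕ) : Set Ω :=
  {ω | ∃ m ≤ M, η * ((2 * m + 1) ^ d : ℕ) < boxSum θ f m ω}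

lemma monotone_maximalSet (η : ℝ≥0∞) : Monotone (maximalSet θ f η) :=
  fun _ _ hM _ ⟨m, hm, h⟩ => ⟨m, hm.trans hM, h⟩

lemma mem_maximalSet_of_lt_boxAvg {η : ℝ≥0∞} {m : ℕ} {ω : Ω} (h : η < boxAvg θ f m ω) :
    ω ∈ maximalSet θ f η m :=
  ⟨m, le_rfl, mul_comm η _ ▸ (ENNReal.lt_div_iff_mul_lt (.inl (by positivity))
    (.inl (ENNReal.natCast_ne_top _))).1 h⟩

variable {θ f}

lemma measurable_boxSum [MeasurableSpace Ω] (hθ : ∀ z, Measurable (θ z)) (hf : Measurable f)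
    (m : ℕ) : Measurable (boxSum θ f m) :=
  Finset.measurable_sum _ fun z _ => hf.comp (hθ z)

lemma boxSum_comp (hadd : ∀ z z', θ (z + z') = θ z ∘ θ z') (m : ℕ) (x : Fin d → ℤ) (ω : Ω) :
    boxSum θ f m (θ x ω) = ∑ y ∈ latticeBall x m, f (θ y ω) := by
  refine sum_nbij' (· + x) (· - x) (fun z hz => ?_) (fun y hy => ?_) (fun z _ => by simp)
    (fun y _ => by simp) (fun z _ => by rw [hadd]; rfl)
  · simpa [mem_latticeBall] using hz
  · simpa [mem_latticeBall] using hy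

lemma boxSum_comp_le (hadd : ∀ z z', θ (z + z') = θ z ∘ θ z') (m : ℕ) (x : Fin d → ℤ)
    (ω : Ω) : boxSum θ f m (θ x ω) ≤ boxSum θ f (m + univ.sup fun i => (x i).natAbs) ω := by
  rw [boxSum_comp hadd]
  refine sum_le_sum_of_subset (latticeBall_subset_latticeBall fun i => ?_)
  have : (x i).natAbs ≤ univ.sup fun i => (x i).natAbs :=
    le_sup (f := fun i => (x i).natAbs) (mem_univ i)
  rw [Pi.zero_apply, sub_zero, Int.abs_eq_natAbs]
  omega

lemma limsup_boxAvg_comp_le (hadd : ∀ z z', θ (z + z') = θ z ∘ θ z') (x : Fin d → ℤ)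
    (ω : Ω) :
    limsup (fun m => boxAvg θ f m (θ x ω)) atTop ≤ limsup (fun m => boxAvg θ f m ω) atTop := by
  set c := univ.sup fun i => (x i).natAbs
  have hratio := tendsto_ratio_two_mul_add_one_pow d c
  have hlim := hratio.limsup_eq
  calc limsup (fun m => boxAvg θ f m (θ x ω)) atTop
      ≤ limsup ((fun m : ℕ => (((2 * (m + c) + 1) ^ d : ℕ) : ℝ≥0∞) / ((2 * m + 1) ^ d : ℕ)) *
          fun m => boxAvg θ f (m + c) ω) atTop := by
        refine limsup_le_limsup (Eventually.of_forall fun m => ?_)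
        rw [Pi.mul_apply, ← ENNReal.mul_div_right_comm, natCast_mul_boxAvg]
        exact ENNReal.div_le_div_right (boxSum_comp_le hadd m x ω) _
    _ ≤ 1 * limsup (fun m => boxAvg θ f (m + c) ω) atTop := by
        rw [← hlim]
        exact ENNReal.limsup_mul_le' (.inl (by rw [hlim]; exact one_ne_zero))
          (.inl (by rw [hlim]; exact ENNReal.one_ne_top))
    _ = limsup (fun m => boxAvg θ f m ω) atTop := by
        rw [one_mul, limsup_nat_add (fun m => boxAvg θ f m ω) c]

lemma limsup_boxAvg_comp (hzero : θ 0 = id) (hadd : ∀ z z', θ (z + z') = θ z ∘ θ z')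
    (x : Fin d → ℤ) (ω : Ω) :
    limsup (fun m => boxAvg θ f m (θ x ω)) atTop = limsup (fun m => boxAvg θ f m ω) atTop := by
  refine le_antisymm (limsup_boxAvg_comp_le hadd x ω) ?_
  have hinv : θ (-x) (θ x ω) = ω := by
    rw [← Function.comp_apply (f := θ (-x)), ← hadd, neg_add_cancel, hzero, id]
  simpa only [hinv] using limsup_boxAvg_comp_le hadd (-x) (θ x ω)

-- The left side counts the lattice points `x` of the box of radius `M` at which the maximal
-- average of `f` along the orbit of `ω` exceeds `η`; these points are covered à la Vitali.
lemma boxSum_indicator_maximalSet_mul_le (hadd : ∀ z z', θ (z + z') = θ z ∘ θ z') (η : ℝ≥0∞)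
    (M : ℕ) (ω : Ω) :
    boxSum θ ((maximalSet θ f η M).indicator 1) M ω * η ≤ 5 ^ d * boxSum θ f (2 * M) ω := by
  classical
  set E := (latticeBall 0 M).filter fun x => θ x ω ∈ maximalSet θ f η M
  have hcard : boxSum θ ((maximalSet θ f η M).indicator 1) M ω = #E := by
    simp [boxSum, E, Set.indicator_apply, sum_boole]
  have hE : ∀ x ∈ E, ∃ m ≤ M,
      η * ((2 * m + 1) ^ d : ℕ) < ∑ y ∈ latticeBall x m, f (θ y ω) := by
    intro x hx
    simpa only [maximalSet, Set.mem_ofPred_eq, boxSum_comp hadd] using (mem_filter.1 hx).2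
  choose! r hrM hr using hE
  rw [hcard]
  refine (card_mul_le_of_lt_sum_latticeBall _ η E r hr).trans ?_
  gcongr 5 ^ d * ?_
  refine sum_le_sum_of_subset (biUnion_subset.2 fun x hx => latticeBall_subset_latticeBall
    fun i => ?_)
  have := mem_latticeBall.1 (mem_filter.1 hx).1 i
  have := hrM x hx
  omega

end BoxAverage

section MaximalInequality

variable {d : ℕ} {Ω : Type*} [MeasurableSpace Ω] {θ : (Fin d → ℤ) → Ω → Ω}
  {f : Ω → ℝ≥0∞} {P : Measure Ω}

lemma lintegral_boxSum (hθ : ∀ z, MeasurePreserving (θ z) P P) (hf : Measurable f) (m : ℕ) :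
    ∫⁻ ω, boxSum θ f m ω ∂P = ((2 * m + 1) ^ d : ℕ) * ∫⁻ ω, f ω ∂P := by
  unfold boxSum
  rw [lintegral_finsetSum (f := fun z ω => f (θ z ω)) _
      fun z _ => hf.comp (hθ z).measurable,
    sum_congr rfl fun z _ => (hθ z).lintegral_comp hf, sum_const, card_latticeBall,
    nsmul_eq_mul]

lemma measurableSet_maximalSet (hθ : ∀ z, Measurable (θ z)) (hf : Measurable f) (η : ℝ≥0∞)
    (M : ℕ) : MeasurableSet (maximalSet θ f η M) := by
  simp only [maximalSet, Set.ofPred_exists]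
  exact .iUnion fun m => (MeasurableSet.const _).inter <|
    measurableSet_lt measurable_const (measurable_boxSum hθ hf m)

-- The constant `10 ^ d` is `5 ^ d` from the Vitali enlargement times `2 ^ d` from passing to
-- the box of twice the radius.
theorem mul_measure_iUnion_maximalSet_le (hθ : ∀ z, MeasurePreserving (θ z) P P)
    (hadd : ∀ z z', θ (z + z') = θ z ∘ θ z') (hf : Measurable f) (η : ℝ≥0∞) :
    η * P (⋃ M, maximalSet θ f η M) ≤ 10 ^ d * ∫⁻ ω, f ω ∂P := by
  have hG := measurableSet_maximalSet (fun z => (hθ z).measurable) hf η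
  rw [(monotone_maximalSet θ f η).measure_iUnion, ENNReal.mul_iSup]
  refine iSup_le fun M => ?_
  set c : ℝ≥0∞ := (((2 * M + 1) ^ d : ℕ) : ℝ≥0∞)
  have hc : c ≠ 0 := by positivity
  refine (ENNReal.mul_le_mul_iff_right hc (ENNReal.natCast_ne_top _)).1 ?_
  calc c * (η * P (maximalSet θ f η M))
      = ∫⁻ ω, boxSum θ ((maximalSet θ f η M).indicator 1) M ω * η ∂P := by
        rw [lintegral_mul_const _ (measurable_boxSum (fun z => (hθ z).measurable)
          (measurable_one.indicator (hG M)) M), lintegral_boxSum hθ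
          (measurable_one.indicator (hG M)), lintegral_indicator_one (hG M)]
        ring
    _ ≤ ∫⁻ ω, 5 ^ d * boxSum θ f (2 * M) ω ∂P :=
        lintegral_mono fun ω => boxSum_indicator_maximalSet_mul_le hadd η M ω
    _ = 5 ^ d * (((2 * (2 * M) + 1) ^ d : ℕ) * ∫⁻ ω, f ω ∂P) := by
        rw [lintegral_const_mul _ (measurable_boxSum (fun z => (hθ z).measurable) hf _),
          lintegral_boxSum hθ hf]
    _ ≤ 5 ^ d * ((2 ^ d * (2 * M + 1) ^ d : ℕ) * ∫⁻ ω, f ω ∂P) := by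
        gcongr
        rw [← mul_pow]
        exact Nat.pow_le_pow_left (by omega) d
    _ = c * (10 ^ d * ∫⁻ ω, f ω ∂P) := by
        push_cast [c]
        rw [show (10 : ℝ≥0∞) = 5 * 2 by norm_num, mul_pow]
        ring

theorem ae_limsup_boxAvg_le [IsProbabilityMeasure P] (hθ : ∀ z, MeasurePreserving (θ z) P P)
    (hzero : θ 0 = id) (hadd : ∀ z z', θ (z + z') = θ z ∘ θ z')
    (hergodic : ∀ A, MeasurableSet A → (∀ z, θ z ⁻¹' A = A) → P A = 0 ∨ P A = 1)
    (hf : Measurable f) {η : ℝ≥0∞} (hη : 10 ^ d * ∫⁻ ω, f ω ∂P < η) :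
    ∀ᵐ ω ∂P, limsup (fun m => boxAvg θ f m ω) atTop ≤ η := by
  set A := {ω | limsup (fun m => boxAvg θ f m ω) atTop ≤ η}
  have hA : MeasurableSet A := measurableSet_le (Measurable.limsup fun m =>
    (measurable_boxSum (fun z => (hθ z).measurable) hf m).div_const _) measurable_const
  have hinv : ∀ z, θ z ⁻¹' A = A := fun z => by
    ext ω
    simp only [A, Set.mem_preimage, Set.mem_ofPred_eq, limsup_boxAvg_comp hzero hadd]
  have hAc : Aᶜ ⊆ ⋃ M, maximalSet θ f η M := fun ω hω => by
    have hlt : η < limsup (fun m => boxAvg θ f m ω) atTop := not_le.1 hω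
    obtain ⟨m, hm⟩ := (frequently_lt_of_lt_limsup (by isBoundedDefault) hlt).exists
    exact Set.mem_iUnion.2 ⟨m, mem_maximalSet_of_lt_boxAvg θ f hm⟩
  rw [ae_iff]
  refine ((hergodic A hA hinv).resolve_left fun h0 => ?_) |> (prob_compl_eq_zero_iff hA).2
  refine hη.not_ge ?_
  calc η = η * P Aᶜ := by rw [(prob_compl_eq_one_iff hA).2 h0, mul_one]
    _ ≤ η * P (⋃ M, maximalSet θ f η M) := by gcongr
    _ ≤ 10 ^ d * ∫⁻ ω, f ω ∂P := mul_measure_iUnion_maximalSet_le hθ hadd hf η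

end MaximalInequality

end IntLattice

namespace PoissonMatchingEnsemble

open IntLattice

section UnitCube

variable {d : ℕ}

def unitCube (w : Fin d → ℤ) : Set (Euc d) := {x | ∀ i, (w i : ℝ) ≤ x i ∧ x i < w i + 1}

def longEdges (L : ℝ) (w : Fin d → ℤ) : Set (Euc d × Euc d) :=
  {p | p.1 ∈ unitCube w ∧ L < ‖p.2 - p.1‖}

lemma unitCube_eq_preimage (w : Fin d → ℤ) :
    unitCube w = (MeasurableEquiv.toLp 2 (Fin d → ℝ)).symm ⁻¹'
      Set.univ.pi fun i => Set.Ico (w i : ℝ) (w i + 1) := by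
  ext x
  simp [unitCube]

lemma measurableSet_unitCube (w : Fin d → ℤ) : MeasurableSet (unitCube w) := by
  rw [unitCube_eq_preimage]
  exact (MeasurableEquiv.toLp 2 (Fin d → ℝ)).symm.measurable
    (.univ_pi fun _ => measurableSet_Ico)

lemma volume_unitCube (w : Fin d → ℤ) : volume (unitCube w) = 1 := by
  rw [unitCube_eq_preimage, (EuclideanSpace.volume_preserving_symm_measurableEquiv_toLp
    (Fin d)).measure_preimage (MeasurableSet.univ_pi fun _ => measurableSet_Ico).nullMeasurableSet]
  simp [volume_pi_pi]

lemma measurableSet_longEdges (L : ℝ) (w : Fin d → ℤ) : MeasurableSet (longEdges L w) :=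
  (measurable_fst (measurableSet_unitCube w)).inter
    (measurableSet_lt measurable_const (continuous_snd.sub continuous_fst).norm.measurable)

lemma longEdges_antitone (w : Fin d → ℤ) : Antitone fun L : ℝ => longEdges L w :=
  fun _ _ hL _ hp => ⟨hp.1, hL.trans_lt hp.2⟩

lemma iInter_longEdges (w : Fin d → ℤ) : ⋂ n : ℕ, longEdges (n : ℝ) w = ∅ :=
  Set.eq_empty_of_forall_notMem fun p hp =>
    let ⟨n, hn⟩ := exists_nat_ge ‖p.2 - p.1‖
    (Set.mem_iInter.1 hp n).2.not_ge hn

lemma preimage_add_intVec_longEdges (L : ℝ) (w : Fin d → ℤ) :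
    (fun p : Euc d × Euc d => (p.1 + intVec d (-w), p.2 + intVec d (-w))) ⁻¹' longEdges L 0
      = longEdges L w := by
  ext p
  simp [longEdges, unitCube, intVec, add_comm (1 : ℝ)]

lemma subset_iUnion_longEdges (L R : ℝ) :
    {p : Euc d × Euc d | (∀ i, p.1 i ∈ Set.Ioo (-R) R) ∧ L < ‖p.2 - p.1‖}
      ⊆ ⋃ w ∈ latticeBall 0 ⌈R⌉₊, longEdges L w := by
  rintro p ⟨hbox, hL⟩
  refine Set.mem_biUnion (x := fun i => ⌊p.1 i⌋) (mem_latticeBall.2 fun i => ?_)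
    ⟨fun i => ⟨Int.floor_le _, Int.lt_floor_add_one _⟩, hL⟩
  obtain ⟨h1, h2⟩ := hbox i
  have := Nat.le_ceil R
  rw [Pi.zero_apply, sub_zero, abs_le, Int.le_floor, ← Int.lt_add_one_iff, Int.floor_lt]
  push_cast
  constructor <;> linarith

end UnitCube

variable {d : ℕ} {Ω : Type*} [MeasurableSpace Ω] (ens : PoissonMatchingEnsemble d Ω)

def longEdgeMass (L : ℝ) (ω : Ω) : ℝ≥0∞ := ens.Q ω (longEdges L 0)

lemma measurable_longEdgeMass (L : ℝ) : Measurable (ens.longEdgeMass L) :=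
  (Measure.measurable_coe (measurableSet_longEdges L 0)).comp ens.Q_meas

lemma lintegral_μ_unitCube : ∫⁻ ω, ens.μ ω (unitCube 0) ∂ens.P = 1 := by
  have := ens.isProb
  have hlaw (k : ℕ) : ens.P {ω | ens.μ ω (unitCube 0) = k} = poissonMeasure 1 {k} := by
    simpa [poissonMeasure_singleton, volume_unitCube] using
      ens.μ_poisson.1 _ (measurableSet_unitCube 0) (by simp [volume_unitCube]) k
  simpa using lintegral_eq_of_measure_eq_poissonMeasure
    ((Measure.measurable_coe (measurableSet_unitCube 0)).comp ens.μ_meas) hlaw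

lemma ae_longEdgeMass_le :
    ∀ᵐ ω ∂ens.P, ∀ L, ens.longEdgeMass L ω ≤ ens.μ ω (unitCube 0) := by
  filter_upwards [ens.marg_fst] with ω hω L
  rw [← hω, Measure.map_apply measurable_fst (measurableSet_unitCube 0)]
  exact measure_mono fun p hp => hp.1

lemma tendsto_lintegral_longEdgeMass :
    Tendsto (fun n : ℕ => ∫⁻ ω, ens.longEdgeMass n ω ∂ens.P) atTop (𝓝 0) := by
  have hμ := ens.lintegral_μ_unitCube
  have hμmeas : Measurable fun ω => ens.μ ω (unitCube 0) :=
    (Measure.measurable_coe (measurableSet_unitCube 0)).comp ens.μ_meas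
  have h := tendsto_lintegral_of_dominated_convergence (f := fun _ => 0) _
    (fun n : ℕ => ens.measurable_longEdgeMass n)
    (fun n => by filter_upwards [ens.ae_longEdgeMass_le] with ω hω using hω n)
    (by simp [hμ]) ?_
  · simpa using h
  · filter_upwards [ens.ae_longEdgeMass_le, ae_lt_top hμmeas (by simp [hμ])] with ω hle hfin
    have hfin0 : ens.Q ω (longEdges ((0 : ℕ) : ℝ) 0) ≠ ⊤ := by
      simpa [longEdgeMass] using ((hle 0).trans_lt hfin).ne
    simpa [iInter_longEdges, Function.comp_def, longEdgeMass] using tendsto_measure_iInter_atTop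
      (fun n => (measurableSet_longEdges _ 0).nullMeasurableSet)
      ((longEdges_antitone 0).comp_monotone Nat.mono_cast) ⟨0, hfin0⟩

lemma exists_mul_lintegral_longEdgeMass_lt {δ : ℝ≥0∞} (hδ : 0 < δ) :
    ∃ n : ℕ, 10 ^ d * ∫⁻ ω, ens.longEdgeMass n ω ∂ens.P < δ := by
  have h := ENNReal.Tendsto.const_mul (a := 10 ^ d) ens.tendsto_lintegral_longEdgeMass
    (.inr (by simp))
  rw [mul_zero] at h
  exact (h.eventually_lt_const hδ).exists

lemma ae_Q_longEdges_eq (L : ℝ) :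
    ∀ᵐ ω ∂ens.P, ∀ w, ens.Q ω (longEdges L w) = ens.longEdgeMass L (ens.θ (-w) ω) := by
  refine ae_all_iff.2 fun w => ?_
  filter_upwards [ens.Q_equivariant (-w)] with ω hω
  rw [longEdgeMass, hω, Measure.map_apply (by fun_prop) (measurableSet_longEdges L 0),
    preimage_add_intVec_longEdges]

lemma ae_Q_le_boxSum (L : ℝ) :
    ∀ᵐ ω ∂ens.P, ∀ R : ℝ, ens.Q ω {p | (∀ i, p.1 i ∈ Set.Ioo (-R) R) ∧ L < ‖p.2 - p.1‖}
      ≤ boxSum ens.θ (ens.longEdgeMass L) ⌈R⌉₊ ω := by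
  filter_upwards [ens.ae_Q_longEdges_eq L] with ω hω R
  calc _ ≤ ens.Q ω (⋃ w ∈ latticeBall 0 ⌈R⌉₊, longEdges L w) :=
        measure_mono (subset_iUnion_longEdges L R)
    _ ≤ ∑ w ∈ latticeBall 0 ⌈R⌉₊, ens.Q ω (longEdges L w) := measure_biUnion_finset_le _ _
    _ = boxSum ens.θ (ens.longEdgeMass L) ⌈R⌉₊ ω :=
        sum_equiv (Equiv.neg _) (fun w => by simp [mem_latticeBall]) fun w _ => hω w

end PoissonMatchingEnsemble

open IntLattice

/-- **Lemma 2.1 (the ergodic `L⁰` estimate).** For every `ε > 0` there is a deterministic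
`L < ∞` such that almost surely, for all sufficiently large `R`, the `Q`-mass of pairs
`(x, y)` with `x ∈ (-R, R)^d` and `|y - x| > L` is at most `(εR)^d`. -/
theorem ergodic_L0_estimate
    (d : ℕ) {Ω : Type*} [MeasurableSpace Ω] (ens : PoissonMatchingEnsemble d Ω)
    (ε : ℝ) (hε : 0 < ε) :
    ∃ L : ℝ, ∀ᵐ ω ∂ens.P, ∃ rstar : ℝ, ∀ R : ℝ, rstar ≤ R →
      ens.Q ω {p : Euc d × Euc d |
          (∀ i, p.1 i ∈ Set.Ioo (-R) R) ∧ L < ‖p.2 - p.1‖} ≤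
        ENNReal.ofReal ((ε * R) ^ d) := by
  have := ens.isProb
  set δ := ENNReal.ofReal ((ε / 5) ^ d)
  have hδ : δ ≠ 0 := (ENNReal.ofReal_pos.2 (by positivity)).ne'
  obtain ⟨n, hn⟩ := ens.exists_mul_lintegral_longEdgeMass_lt (ENNReal.half_pos hδ)
  refine ⟨n, ?_⟩
  filter_upwards [ae_limsup_boxAvg_le ens.θ_measurePreserving ens.θ_zero ens.θ_add ens.ergodic
    (ens.measurable_longEdgeMass n) hn, ens.ae_Q_le_boxSum n] with ω hlim hQ
  obtain ⟨M, hM⟩ := eventually_atTop.1 (eventually_lt_of_limsup_lt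
    (hlim.trans_lt (ENNReal.half_lt_self hδ ENNReal.ofReal_ne_top)))
  refine ⟨max (M : ℝ) 1, fun R hR => ?_⟩
  have hR1 : 1 ≤ R := le_of_max_le_right hR
  have hMR : M ≤ ⌈R⌉₊ := Nat.cast_le.1 ((le_of_max_le_left hR).trans (Nat.le_ceil R))
  calc _ ≤ boxSum ens.θ (ens.longEdgeMass n) ⌈R⌉₊ ω := hQ R
    _ = ((2 * ⌈R⌉₊ + 1) ^ d : ℕ) * boxAvg ens.θ (ens.longEdgeMass n) ⌈R⌉₊ ω :=
        (natCast_mul_boxAvg _ _ _ _).symm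
    _ ≤ ENNReal.ofReal ((5 * R) ^ d) * δ := by
        gcongr
        · exact natCast_two_mul_ceil_add_one_pow_le d hR1
        · exact (hM _ hMR).le
    _ = ENNReal.ofReal ((ε * R) ^ d) := by
        rw [← ENNReal.ofReal_mul (by positivity), ← mul_pow]
        ring_nf

end
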